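/- The necklace-type bracket on trace functionals of the tensor algebra satisfies the Jacobi identity: {{R, S}, T} + {{T, R}, S} + {{S, T}, R} = 0 for all monomial trace functionals R, S, T. The key mechanism: terms in the triple bracket that contract two letters of R (one with a letter of S, one with a letter of T) appear with opposite signs in {{R,S},T} and {{T,R},S} and cancel; symmetrically for S and T. -/

import Mathlib

open scoped BigOperators Classical

/-- The product in the tensor algebra of the letters of a word. -/
noncomputable def wordProd (F : Type*) [Field F] {V : Type*} [AddCommGroup V] [Module F V]
    (w : List V) : TensorAlgebra F V :=
  (w.map (TensorAlgebra.ι F)).prod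

/-- The necklace bracket of two cyclic words, as a formal linear combination of cyclic
words: sum over all pairs of letters (one from each word), contract them via `ω`, and
concatenate the two remaining linear words `v_{j+1}⋯v_{j-1}` and `w_{i+1}⋯w_{i-1}`. -/
noncomputable def nb {F : Type*} [Field F] {V : Type*} [AddCommGroup V] [Module F V]
    (ω : V →ₗ[F] V →ₗ[F] F) (a b : List V) : (List V) →₀ F :=
  ∑ j : Fin a.length, ∑ i : Fin b.length,
    Finsupp.single ((a.rotate (j + 1)).dropLast ++ (b.rotate (i + 1)).dropLast)
      (ω (a.get j) (b.get i))

/-- The necklace bracket of a formal linear combination of words with a single word,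
extended linearly. -/
noncomputable def nbExt {F : Type*} [Field F] {V : Type*} [AddCommGroup V] [Module F V]
    (ω : V →ₗ[F] V →ₗ[F] F) (x : (List V) →₀ F) (c : List V) : (List V) →₀ F :=
  x.sum fun w cw => cw • nb ω w c

/-- The trace functional applied to a formal linear combination of words. -/
noncomputable def traceOf {F : Type*} [Field F] {V : Type*} [AddCommGroup V] [Module F V]
    (τ : TensorAlgebra F V →ₗ[F] F) (x : (List V) →₀ F) : F :=
  x.sum fun w c => c * τ (wordProd F w)

/-!
Expanding `{{a, b}, c}`, the letter contracted with `c` lies either in the remainder of `a` or in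
the remainder of `b`. By antisymmetry of `ω` the second kind of term is the first kind with `a`
and `b` exchanged, so `tr {{a, b}, c} = D(a; b, c) - D(b; a, c)`, where `D(a; b, c)` collects the
terms contracting two letters of `a`, one with `b` and one with `c`. Relabelling which of the two
letters of `a` meets `b`, together with cyclicity of `τ`, shows `D(a; b, c) = D(a; c, b)`; then
the six terms of the Jacobi sum cancel in pairs.
-/

namespace Necklace

section Cut

variable {α : Type*}

def cut (a : List α) (j : ℕ) : List α := (a.rotate (j + 1)).dropLast

theorem length_cut (a : List α) (j : ℕ) : (cut a j).length = a.length - 1 := by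
  simp [cut]

theorem getElem_cut (a : List α) (j t : ℕ) (ht : t < (cut a j).length) :
    (cut a j)[t] = a[(t + (j + 1)) % a.length]'
      (Nat.mod_lt _ (by rw [length_cut] at ht; omega)) := by
  simp only [cut, List.getElem_dropLast, List.getElem_rotate]

theorem cut_eq_drop_append_take (a : List α) {j : ℕ} (hj : j < a.length) :
    cut a j = a.drop (j + 1) ++ a.take j := by
  rw [cut, List.rotate_eq_drop_append_take hj, List.take_succ_eq_append_getElem hj,
    ← List.append_assoc, List.dropLast_concat]

theorem rotate_succ_eq_cut_append (a : List α) {j : ℕ} (hj : j < a.length) :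
    a.rotate (j + 1) = cut a j ++ [a[j]] := by
  rw [List.rotate_eq_drop_append_take hj, List.take_succ_eq_append_getElem hj,
    ← List.append_assoc, cut_eq_drop_append_take a hj]

theorem cut_append_of_lt_length (u v : List α) {p : ℕ} (hp : p < u.length) :
    cut (u ++ v) p = u.drop (p + 1) ++ v ++ u.take p := by
  rw [cut_eq_drop_append_take _ (by rw [List.length_append]; omega), List.drop_append_of_le_length hp,
    List.take_append_of_le_length hp.le]

theorem cut_length_add (u v : List α) {p : ℕ} (hp : p < v.length) :
    cut (u ++ v) (u.length + p) = v.drop (p + 1) ++ u ++ v.take p := by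
  rw [cut, add_assoc, ← List.rotate_rotate, List.rotate_append_length_eq, ← cut,
    cut_append_of_lt_length v u hp]

theorem cut_cut (a : List α) {j p : ℕ} (hj : j < a.length) (hp : p < a.length - 1) :
    cut a ((p + (j + 1)) % a.length) = (cut a j).drop (p + 1) ++ [a[j]] ++ (cut a j).take p := by
  rw [cut, ← List.rotate_rotate, List.rotate_mod, add_comm p, ← List.rotate_rotate,
    List.rotate_rotate _ p, rotate_succ_eq_cut_append a hj, ← cut,
    cut_append_of_lt_length _ _ (by rw [length_cut]; exact hp)]

end Cut

/-- Exchanges the two deleted letters: if `a_j` and `a_k`, `k = j + p + 1`, are deleted from a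
cyclic word of length `n`, then `a_k` sits at position `p` of `cut a j` and `a_j` at position
`n - 2 - p` of `cut a k`. -/
def cutSwap (n : ℕ) (x : Fin n × Fin (n - 1)) : Fin n × Fin (n - 1) :=
  (⟨(x.2 + (x.1 + 1)) % n, Nat.mod_lt _ x.1.pos⟩, ⟨n - 2 - x.2, by omega⟩)

theorem cutSwap_involutive (n : ℕ) : Function.Involutive (cutSwap n) := by
  rintro ⟨⟨j, hj⟩, ⟨p, hp⟩⟩
  refine Prod.ext (Fin.ext ?_) (Fin.ext ?_)
  · change (n - 2 - p + ((p + (j + 1)) % n + 1)) % n = j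
    rw [show n - 2 - p + ((p + (j + 1)) % n + 1) = n - 1 - p + (p + (j + 1)) % n by omega,
      Nat.add_mod_mod, show n - 1 - p + (p + (j + 1)) = n + j by omega, Nat.add_mod_left,
      Nat.mod_eq_of_lt hj]
  · change n - 2 - (n - 2 - p) = p
    omega

section Trace

variable {F : Type*} [Field F] {V : Type*} [AddCommGroup V] [Module F V]
  (ω : V →ₗ[F] V →ₗ[F] F) (τ : TensorAlgebra F V →ₗ[F] F)

theorem wordProd_append (u v : List V) : wordProd F (u ++ v) = wordProd F u * wordProd F v := by
  simp [wordProd]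

theorem trace_wordProd_append_comm {τ : TensorAlgebra F V →ₗ[F] F}
    (hτ : ∀ x y, τ (x * y) = τ (y * x)) (u v : List V) :
    τ (wordProd F (u ++ v)) = τ (wordProd F (v ++ u)) := by
  rw [wordProd_append, wordProd_append, hτ]

theorem traceOf_eq_linearCombination (x : List V →₀ F) :
    traceOf τ x = Finsupp.linearCombination F (fun w => τ (wordProd F w)) x := by
  rw [Finsupp.linearCombination_apply]; rfl

theorem nbExt_eq_linearCombination (x : List V →₀ F) (c : List V) :
    nbExt ω x c = Finsupp.linearCombination F (fun w => nb ω w c) x := by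
  rw [Finsupp.linearCombination_apply]; rfl

theorem nb_eq_sum_cut (a b : List V) :
    nb ω a b = ∑ j : Fin a.length, ∑ i : Fin b.length,
      Finsupp.single (cut a j ++ cut b i) (ω (a.get j) (b.get i)) :=
  rfl

theorem traceOf_nb (w c : List V) :
    traceOf τ (nb ω w c) = ∑ q : Fin w.length, ∑ l : Fin c.length,
      ω (w.get q) (c.get l) * τ (wordProd F (cut w q ++ cut c l)) := by
  simp [traceOf_eq_linearCombination, nb_eq_sum_cut, map_sum]

theorem traceOf_nbExt_nb (a b c : List V) :
    traceOf τ (nbExt ω (nb ω a b) c) = ∑ j : Fin a.length, ∑ i : Fin b.length,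
      ω (a.get j) (b.get i) * traceOf τ (nb ω (cut a j ++ cut b i) c) := by
  simp [traceOf_eq_linearCombination, nbExt_eq_linearCombination, nb_eq_sum_cut (a := a),
    map_sum]

/-- The part of `traceOf τ (nb ω (u ++ v) c)` in which the contracted letter of `u ++ v`
lies in `u`. -/
noncomputable def traceNbLeft (u v c : List V) : F :=
  ∑ p : Fin u.length, ∑ l : Fin c.length,
    ω (u.get p) (c.get l) * τ (wordProd F (u.drop (p + 1) ++ v ++ u.take p ++ cut c l))

theorem traceOf_nb_append (u v c : List V) :
    traceOf τ (nb ω (u ++ v) c) = traceNbLeft ω τ u v c + traceNbLeft ω τ v u c := by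
  rw [traceOf_nb, ← Fin.sum_congr' _ List.length_append.symm, Fin.sum_univ_add]
  congr 1 <;> refine Finset.sum_congr rfl fun p _ => Finset.sum_congr rfl fun l _ => ?_
  · simp [cut_append_of_lt_length u v p.isLt, List.getElem_append_left]
  · simp [cut_length_add u v p.isLt, List.getElem_append_right]

/-- The part of `traceOf τ (nbExt ω (nb ω a b) c)` in which both contracted letters lie in `a`. -/
noncomputable def doubleContraction (a b c : List V) : F :=
  ∑ j : Fin a.length, ∑ i : Fin b.length,
    ω (a.get j) (b.get i) * traceNbLeft ω τ (cut a j) (cut b i) c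

theorem traceOf_nbExt_nb_eq_sub {ω : V →ₗ[F] V →ₗ[F] F} (hω : ∀ v w, ω v w = -ω w v)
    (a b c : List V) :
    traceOf τ (nbExt ω (nb ω a b) c)
      = doubleContraction ω τ a b c - doubleContraction ω τ b a c := by
  simp only [traceOf_nbExt_nb, traceOf_nb_append, mul_add, Finset.sum_add_distrib,
    doubleContraction, sub_eq_add_neg, ← Finset.sum_neg_distrib]
  congr 1
  rw [Finset.sum_comm]
  simp only [hω (a.get _), neg_mul]

theorem doubleContraction_eq_sum (a b c : List V) :
    doubleContraction ω τ a b c = ∑ x : Fin a.length × Fin (a.length - 1),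
      ∑ i : Fin b.length, ∑ l : Fin c.length,
        ω (a.get x.1) (b.get i) *
          ω ((cut a x.1)[x.2.val]'(by rw [length_cut]; exact x.2.isLt)) (c.get l) *
            τ (wordProd F ((cut a x.1).drop (x.2 + 1) ++ cut b i ++ (cut a x.1).take x.2
              ++ cut c l)) := by
  rw [Fintype.sum_prod_type, doubleContraction]
  refine Finset.sum_congr rfl fun j _ => ?_
  simp only [traceNbLeft, Finset.mul_sum]
  rw [Finset.sum_comm, ← Fin.sum_congr' _ (length_cut a j).symm]
  simp only [Fin.val_cast, List.get_eq_getElem, mul_assoc]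

theorem doubleContraction_comm {τ : TensorAlgebra F V →ₗ[F] F}
    (hτ : ∀ x y, τ (x * y) = τ (y * x)) (a b c : List V) :
    doubleContraction ω τ a b c = doubleContraction ω τ a c b := by
  rw [doubleContraction_eq_sum, doubleContraction_eq_sum,
    ← Equiv.sum_comp (Function.Involutive.toPerm _ (cutSwap_involutive a.length))]
  refine Finset.sum_congr rfl fun x _ => ?_
  rw [Finset.sum_comm]
  refine Finset.sum_congr rfl fun i _ => Finset.sum_congr rfl fun l _ => ?_
  obtain ⟨⟨j, hj⟩, ⟨p, hp⟩⟩ := x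
  have hround : (a.length - 2 - p + ((p + (j + 1)) % a.length + 1)) % a.length = j :=
    congrArg (fun y => y.1.val) (cutSwap_involutive a.length (⟨j, hj⟩, ⟨p, hp⟩))
  have hlen : ((cut a j).drop (p + 1)).length = a.length - 2 - p := by
    rw [List.length_drop, length_cut]; omega
  have htake : (cut a ((p + (j + 1)) % a.length)).take (a.length - 2 - p)
      = (cut a j).drop (p + 1) := by
    rw [cut_cut a hj hp, List.append_assoc, List.take_left' hlen]
  have hdrop : (cut a ((p + (j + 1)) % a.length)).drop (a.length - 2 - p + 1)
      = (cut a j).take p := by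
    rw [cut_cut a hj hp, ← hlen, List.append_assoc, List.drop_length_add_append]
    rfl
  simp only [Function.Involutive.coe_toPerm, cutSwap, List.get_eq_getElem, getElem_cut,
    hround, htake, hdrop]
  rw [List.append_assoc _ ((cut a j).drop (p + 1)), trace_wordProd_append_comm hτ,
    ← List.append_assoc]
  ring

end Trace
end Necklace

/-- Jacobi identity for the necklace-type bracket on trace functionals of the tensor
algebra: `{{R,S},T} + {{T,R},S} + {{S,T},R} = 0` for monomial trace functionals given by
words `a, b, c`, with `ω` antisymmetric and `τ` a cyclic trace. -/
theorem nbracket_jacobi {F : Type*} [Field F] {V : Type*} [AddCommGroup V] [Module F V]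
    (ω : V →ₗ[F] V →ₗ[F] F) (hω : ∀ v w, ω v w = -ω w v)
    (τ : TensorAlgebra F V →ₗ[F] F)
    (hτ : ∀ x y : TensorAlgebra F V, τ (x * y) = τ (y * x))
    (a b c : List V) :
    traceOf τ (nbExt ω (nb ω a b) c) + traceOf τ (nbExt ω (nb ω c a) b)
      + traceOf τ (nbExt ω (nb ω b c) a) = 0 := by
  rw [Necklace.traceOf_nbExt_nb_eq_sub τ hω, Necklace.traceOf_nbExt_nb_eq_sub τ hω,
    Necklace.traceOf_nbExt_nb_eq_sub τ hω, Necklace.doubleContraction_comm ω hτ a c b,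
    Necklace.doubleContraction_comm ω hτ b a c, Necklace.doubleContraction_comm ω hτ c a b]
  ring
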